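/- arXiv:2305.05818 — 2 statements merged into one kernel-verified Lean document; each statement's English description precedes it below -/
import Mathlib

section
/- For every double occurrence word w, the empty word ε is a successor of w; in particular, every nonempty double occurrence word has at least one maximal repeat or return factor, and iterated deletions of maximal repeat or return factors starting from w eventually reach ε. -/
/-- A double occurrence word: every symbol occurs zero or exactly two times. -/
def IsDOW (w : List ℕ) : Prop := ∀ x : ℕ, w.count x = 0 ∨ w.count x = 2

/-- `u` is a repeat factor of `w`: `u` is a nonempty single occurrence word and
`w = x u y u z`. -/
def IsRepeatFactor (u w : List ℕ) : Prop :=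
  u ≠ [] ∧ u.Nodup ∧ ∃ x y z : List ℕ, w = x ++ u ++ y ++ u ++ z

/-- `u` is a return factor of `w`: `u` is a nonempty single occurrence word and
`w = x u y u^R z`. -/
def IsReturnFactor (u w : List ℕ) : Prop :=
  u ≠ [] ∧ u.Nodup ∧ ∃ x y z : List ℕ, w = x ++ u ++ y ++ u.reverse ++ z

/-- `u` is a repeat or return factor of `w`. -/
def IsRRFactor (u w : List ℕ) : Prop := IsRepeatFactor u w ∨ IsReturnFactor u w

/-- `u` is a maximal repeat or return factor of `w`: no repeat or return factor of `w`
containing `u` as a contiguous factor is strictly longer. `M^SOW_w = {u | IsMaximalRR u w}`. -/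
def IsMaximalRR (u w : List ℕ) : Prop :=
  IsRRFactor u w ∧ ∀ v : List ℕ, IsRRFactor v w → u <:+: v → v.length ≤ u.length

/-- Ascending-order equivalence: `w ~ w'` iff `w' = map f w` for a bijection `f`
of the alphabet. -/
def AOEquiv (w w' : List ℕ) : Prop := ∃ f : ℕ ≃ ℕ, w' = w.map f

instance aoSetoid : Setoid (List ℕ) where
  r := AOEquiv
  iseqv := by
    refine ⟨fun w => ⟨Equiv.refl ℕ, by simp⟩, ?_, ?_⟩
    · rintro w w' ⟨f, rfl⟩
      exact ⟨f.symm, by simp [List.map_map]⟩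
    · rintro a b c ⟨f, rfl⟩ ⟨g, rfl⟩
      exact ⟨f.trans g, by simp [List.map_map]⟩

/-- Ascending-order equivalence classes of words. -/
abbrev WordClass : Type := Quotient aoSetoid

/-- `v` is an immediate successor of `w` (i.e. `v ∈ D(w)`): `v` is ascending-order
equivalent to `d_u(w)` for some maximal repeat or return factor `u` of `w`. -/
def ImmSucc (w v : List ℕ) : Prop :=
  ∃ u x y z : List ℕ, IsMaximalRR u w ∧
    (w = x ++ u ++ y ++ u ++ z ∨ w = x ++ u ++ y ++ u.reverse ++ z) ∧
    AOEquiv (x ++ y ++ z) v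

/-- `v` is a successor of `w` (allowing `v = w`). -/
def Successor (w v : List ℕ) : Prop := Relation.ReflTransGen ImmSucc w v

/-- The vertices of the word graph `G_w`: ascending-order equivalence classes of `w`
and all of its successors. -/
def WGVertex (w : List ℕ) : Type :=
  { c : WordClass // ∃ v : List ℕ, Successor w v ∧ Quotient.mk aoSetoid v = c }

/-- Adjacency between word classes: an edge from the class of `a` to the class of `b`
iff `b ∈ D(a)`. -/
def ClassAdj (c c' : WordClass) : Prop :=
  ∃ a b : List ℕ, Quotient.mk aoSetoid a = c ∧ Quotient.mk aoSetoid b = c' ∧ ImmSucc a b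

/-- The adjacency relation of the word graph `G_w`. -/
def WGAdj (w : List ℕ) (c c' : WGVertex w) : Prop := ClassAdj c.1 c'.1

/-- `w` is coprime to `w'`: all concatenations `uv` of a vertex of `G_w` with a vertex of
`G_{w'}` are pairwise inequivalent. -/
def CoprimeDOW (w w' : List ℕ) : Prop :=
  ∀ u u' v v' : List ℕ, Successor w u → Successor w u' → Successor w' v → Successor w' v' →
    AOEquiv (u ++ v) (u' ++ v') → (AOEquiv u u' ∧ AOEquiv v v')

lemma rr_length_le {u w : List ℕ} (h : IsRRFactor u w) : u.length ≤ w.length := by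
  rcases h with ⟨_, _, x, y, z, rfl⟩ | ⟨_, _, x, y, z, rfl⟩ <;>
    simp [List.length_append] <;> omega

lemma exists_max_rr {w : List ℕ} (h : ∃ u, IsRRFactor u w) : ∃ u, IsMaximalRR u w := by
  classical
  set S : Set ℕ := {n | ∃ u, IsRRFactor u w ∧ u.length = n} with hS
  have hne : S.Nonempty := ⟨h.choose.length, h.choose, h.choose_spec, rfl⟩
  have hbdd : BddAbove S := ⟨w.length, by rintro n ⟨u, hu, rfl⟩; exact rr_length_le hu⟩
  obtain ⟨u, hu, hlen⟩ := Nat.sSup_mem hne hbdd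
  exact ⟨u, hu, fun v hv _ => hlen ▸ le_csSup hbdd ⟨v, hv, rfl⟩⟩

lemma exists_rr {w : List ℕ} (hw : IsDOW w) (hne : w ≠ []) : ∃ u, IsRRFactor u w := by
  obtain ⟨a, ha⟩ := List.exists_mem_of_ne_nil w hne
  have hc : w.count a = 2 := by
    rcases hw a with h | h
    · exact absurd h (by simpa using (List.count_pos_iff.mpr ha).ne')
    · exact h
  obtain ⟨x, t, rfl⟩ := List.append_of_mem ha
  simp [List.count_append, List.count_cons] at hc
  by_cases hat : a ∈ t
  · obtain ⟨y, z, rfl⟩ := List.append_of_mem hat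
    exact ⟨[a], Or.inl ⟨by simp, List.nodup_singleton a, x, y, z, by simp⟩⟩
  · have hax : a ∈ x := by
      have := List.count_eq_zero.mpr hat
      by_contra hax
      have := List.count_eq_zero.mpr hax
      omega
    obtain ⟨x', x'', rfl⟩ := List.append_of_mem hax
    exact ⟨[a], Or.inl ⟨by simp, List.nodup_singleton a, x', x'', t, by simp⟩⟩

lemma dow_del {x u u' y z : List ℕ} (hu : u.Nodup)
    (hcnt : ∀ a, u'.count a = u.count a)
    (hw : IsDOW (x ++ u ++ y ++ u' ++ z)) : IsDOW (x ++ y ++ z) := by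
  intro a
  have h := hw a
  have h2 := hcnt a
  simp [List.count_append] at h ⊢
  by_cases ha : a ∈ u
  · have h1 : u.count a = 1 := List.count_eq_one_of_mem hu ha
    omega
  · have h0 : u.count a = 0 := List.count_eq_zero.mpr ha
    omega

lemma succ_nil : ∀ n (w : List ℕ), w.length ≤ n → IsDOW w → Successor w [] := by
  intro n
  induction n with
  | zero =>
    intro w hlen _
    have : w = [] := List.length_eq_zero_iff.mp (Nat.le_zero.mp hlen)
    subst this; exact Relation.ReflTransGen.refl
  | succ n ih =>
    intro w hlen hw
    by_cases hne : w = []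
    · subst hne; exact Relation.ReflTransGen.refl
    · obtain ⟨u, hmax⟩ := exists_max_rr (exists_rr hw hne)
      rcases hmax.1 with ⟨hune, hnd, x, y, z, hdec⟩ | ⟨hune, hnd, x, y, z, hdec⟩
      · have hdow : IsDOW (x ++ y ++ z) := dow_del hnd (fun _ => rfl) (hdec ▸ hw)
        have hl : (x ++ y ++ z).length ≤ n := by
          have h1 : 1 ≤ u.length := List.length_pos_iff.mpr hune
          have := hdec ▸ hlen
          simp [List.length_append] at this ⊢
          omega
        exact Relation.ReflTransGen.head
          ⟨u, x, y, z, hmax, Or.inl hdec, ⟨Equiv.refl ℕ, by simp⟩⟩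
          (ih _ hl hdow)
      · have hdow : IsDOW (x ++ y ++ z) :=
          dow_del hnd (fun a => List.count_reverse ..) (hdec ▸ hw)
        have hl : (x ++ y ++ z).length ≤ n := by
          have h1 : 1 ≤ u.length := List.length_pos_iff.mpr hune
          have := hdec ▸ hlen
          simp [List.length_append] at this ⊢
          omega
        exact Relation.ReflTransGen.head
          ⟨u, x, y, z, hmax, Or.inr hdec, ⟨Equiv.refl ℕ, by simp⟩⟩
          (ih _ hl hdow)

/-- the empty word is a successor of every DOW; in particular every
nonempty DOW has a maximal repeat or return factor. -/
theorem empty_is_successor (w : List ℕ) (hw : IsDOW w) :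
    Successor w [] ∧ (w ≠ [] → ∃ u : List ℕ, IsMaximalRR u w) := by
  exact ⟨succ_nil w.length w le_rfl hw, fun hne => exists_max_rr (exists_rr hw hne)⟩
end

section
/- Let w be a double occurrence word and u a nonempty single occurrence word none of whose symbols occur in w, and suppose w and uu are coprime. Then G_{wuu} contains two distinct (but possibly not disjoint) subgraphs each isomorphic to G_w: the induced subgraph on the classes of the vertices v of G_w, and the induced subgraph on the classes of the words vuu for v a vertex of G_w. Similarly G_{uuw} contains two subgraphs isomorphic to G_w, and moreover G_{wuu} ≅ G_{uuw}. -/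
/-!
Attaching the square `u u` of a fresh single occurrence word to a word does not interact with
it: a repeat or return factor of a concatenation of two words with disjoint alphabets lies inside
one of them, and the only maximal one of `u u` is `u`. Hence the immediate successors of `v u u`
are `v` and the words `d u u` with `d` an immediate successor of `v`, so the vertices of
`G_{w u u}` are the classes of the vertices `v` of `G_w` and of the words `v u u`. The word
`v u u` reduces to `u u`, which by coprimality no vertex of `G_w` does; this keeps the two
families apart and rules out the unexpected edges, so `G_{w u u}` is `G_w □ Δ¹`, with an edge
from each `v u u` to `v`. The same argument applies to `u u w`, whence `G_{w u u} ≅ G_{u u w}`.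
-/

/-- The Cartesian product of two digraphs (given by their adjacency relations). -/
def boxAdj {V₁ V₂ : Type*} (A₁ : V₁ → V₁ → Prop) (A₂ : V₂ → V₂ → Prop) :
    V₁ × V₂ → V₁ × V₂ → Prop :=
  fun p q => (p.1 = q.1 ∧ A₂ p.2 q.2) ∨ (p.2 = q.2 ∧ A₁ p.1 q.1)

/-- A source of a digraph: a vertex with no incoming edge. -/
def IsSourceVertex {V : Type*} (A : V → V → Prop) (s : V) : Prop := ∀ v, ¬ A v s

/-- A target of a digraph: a vertex with no outgoing edge. -/
def IsTargetVertex {V : Type*} (A : V → V → Prop) (t : V) : Prop := ∀ v, ¬ A t v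

/-- Weak connectivity: any two vertices are joined by a path in the symmetrized digraph. -/
def WeaklyConnected {V : Type*} (A : V → V → Prop) : Prop :=
  ∀ a b : V, Relation.ReflTransGen (fun x y => A x y ∨ A y x) a b

/-- A digraph has no directed cycles. -/
def NoDirectedCycles {V : Type*} (A : V → V → Prop) : Prop :=
  ∀ v : V, ¬ Relation.TransGen A v v

/-- A digraph is weakly directed if it is weakly connected with a unique source
and a unique target. -/
def WeaklyDirected {V : Type*} (A : V → V → Prop) : Prop :=
  WeaklyConnected A ∧ (∃! s, IsSourceVertex A s) ∧ (∃! t, IsTargetVertex A t)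

/-- A digraph is consistently directed if it is weakly directed and has no directed cycles. -/
def ConsistentlyDirected {V : Type*} (A : V → V → Prop) : Prop :=
  WeaklyDirected A ∧ NoDirectedCycles A

/-- Two digraphs are isomorphic: there is a bijection of vertex sets preserving
adjacency in both directions. -/
def DigraphIso {V₁ V₂ : Type*} (A₁ : V₁ → V₁ → Prop) (A₂ : V₂ → V₂ → Prop) : Prop :=
  ∃ e : V₁ ≃ V₂, ∀ a b : V₁, A₂ (e a) (e b) ↔ A₁ a b

/-- The `n`-dimensional simplicial digraph `Δⁿ` on vertices `v₀, …, vₙ`,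
with an edge from `v_i` to `v_j` iff `i < j`. -/
def simplexAdj (n : ℕ) : Fin (n + 1) → Fin (n + 1) → Prop := fun i j => i < j

open List Function

theorem AOEquiv.refl (w : List ℕ) : AOEquiv w w := aoSetoid.iseqv.refl w

theorem AOEquiv.symm {a b : List ℕ} : AOEquiv a b → AOEquiv b a := aoSetoid.iseqv.symm

theorem AOEquiv.trans {a b c : List ℕ} : AOEquiv a b → AOEquiv b c → AOEquiv a c :=
  aoSetoid.iseqv.trans

theorem mk_eq_mk_iff {a b : List ℕ} :
    (⟦a⟧ : WordClass) = ⟦b⟧ ↔ AOEquiv a b := Quotient.eq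

theorem AOEquiv.length_eq {a b : List ℕ} (h : AOEquiv a b) : a.length = b.length := by
  obtain ⟨f, rfl⟩ := h
  exact (length_map f).symm

theorem AOEquiv.of_append {a b c d : List ℕ} (h : AOEquiv (a ++ b) (c ++ d))
    (hl : a.length = c.length) : AOEquiv a c ∧ AOEquiv b d := by
  obtain ⟨f, hf⟩ := h
  rw [map_append, append_eq_append_iff_of_size_eq_left (by simp [hl])] at hf
  exact ⟨⟨f, hf.1⟩, ⟨f, hf.2⟩⟩

theorem exists_equiv_eqOn {s : Set ℕ} (hs : s.Finite) {φ : ℕ → ℕ} (hφ : s.InjOn φ) :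
    ∃ g : ℕ ≃ ℕ, s.EqOn g φ := by
  obtain ⟨g, hg⟩ := Cardinal.extend_function_of_lt
    ⟨fun x : s => φ x, fun x y h => Subtype.ext (hφ x.2 y.2 h)⟩
    (by simpa using hs.lt_aleph0) ⟨Equiv.refl ℕ⟩
  exact ⟨g, fun x hx => hg ⟨x, hx⟩⟩

theorem exists_disjoint_aoEquiv (u v : List ℕ) : ∃ v', AOEquiv v v' ∧ u.Disjoint v' := by
  obtain ⟨g, hg⟩ := exists_equiv_eqOn (s := {x | x ∈ v}) v.finite_toSet
    (φ := (· + (u.sum + 1))) fun x _ y _ h => by simpa using h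
  refine ⟨v.map g, ⟨g, rfl⟩, fun a hau hav => ?_⟩
  obtain ⟨x, hx, rfl⟩ := mem_map.1 hav
  have hgx : g x = x + (u.sum + 1) := hg hx
  have := le_sum_of_mem hau
  omega

theorem AOEquiv.exists_map_eq_of_disjoint {a b q : List ℕ} (h : AOEquiv a b) (ha : a.Disjoint q)
    (hb : b.Disjoint q) : ∃ g : ℕ ≃ ℕ, a.map g = b ∧ q.map g = q := by
  classical
  obtain ⟨f, rfl⟩ := h
  obtain ⟨g, hg⟩ := exists_equiv_eqOn (s := {x | x ∈ a ∨ x ∈ q}) ((a ++ q).finite_toSet.subset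
      fun x hx => by simpa using hx) (φ := fun x => if x ∈ a then f x else x) <| by
    rintro x (hx | hx) y (hy | hy) h
    · simpa [hx, hy] using h
    · simp only [hx, if_true, if_neg (ha.symm hy)] at h
      exact absurd (h ▸ mem_map_of_mem hx) (hb.symm hy)
    · simp only [hy, if_true, if_neg (ha.symm hx)] at h
      exact absurd (h ▸ mem_map_of_mem hy) (hb.symm hx)
    · simpa only [if_neg (ha.symm hx), if_neg (ha.symm hy)] using h
  refine ⟨g, map_congr_left fun x hx => ?_, ?_⟩
  · simp [hg (Or.inl hx), hx]
  · refine (map_congr_left fun x hx => ?_).trans (map_id q)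
    simp only [hg (Or.inr hx), if_neg (ha.symm hx), id]

theorem AOEquiv.append_right {a b q : List ℕ} (h : AOEquiv a b) (ha : a.Disjoint q)
    (hb : b.Disjoint q) : AOEquiv (a ++ q) (b ++ q) := by
  obtain ⟨g, hga, hgq⟩ := h.exists_map_eq_of_disjoint ha hb
  exact ⟨g, by rw [map_append, hga, hgq]⟩

theorem AOEquiv.append_left {a b q : List ℕ} (h : AOEquiv a b) (ha : a.Disjoint q)
    (hb : b.Disjoint q) : AOEquiv (q ++ a) (q ++ b) := by
  obtain ⟨g, hga, hgq⟩ := h.exists_map_eq_of_disjoint ha hb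
  exact ⟨g, by rw [map_append, hga, hgq]⟩

theorem isRRFactor_iff {t w : List ℕ} : IsRRFactor t w ↔ t ≠ [] ∧ t.Nodup ∧
    ∃ t' x y z, (t' = t ∨ t' = t.reverse) ∧ w = x ++ t ++ y ++ t' ++ z := by
  constructor
  · rintro (⟨ht, hnd, x, y, z, rfl⟩ | ⟨ht, hnd, x, y, z, rfl⟩)
    exacts [⟨ht, hnd, t, x, y, z, Or.inl rfl, rfl⟩, ⟨ht, hnd, _, x, y, z, Or.inr rfl, rfl⟩]
  · rintro ⟨ht, hnd, t', x, y, z, rfl | rfl, rfl⟩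
    exacts [Or.inl ⟨ht, hnd, x, y, z, rfl⟩, Or.inr ⟨ht, hnd, x, y, z, rfl⟩]

theorem IsRRFactor.ne_nil {t w : List ℕ} (h : IsRRFactor t w) : t ≠ [] := (isRRFactor_iff.1 h).1

theorem IsRRFactor.infix {t w : List ℕ} (h : IsRRFactor t w) : t <:+: w := by
  obtain ⟨-, -, t', x, y, z, -, rfl⟩ := isRRFactor_iff.1 h
  exact ⟨x, y ++ t' ++ z, by simp⟩

theorem IsRRFactor.mono {t w w' : List ℕ} (h : IsRRFactor t w) (hw : w <:+: w') :
    IsRRFactor t w' := by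
  obtain ⟨ht, hnd, t', x, y, z, ht', rfl⟩ := isRRFactor_iff.1 h
  obtain ⟨l, r, rfl⟩ := hw
  exact isRRFactor_iff.2 ⟨ht, hnd, t', l ++ x, y, z ++ r, ht', by simp⟩

theorem IsRRFactor.map (f : ℕ ≃ ℕ) {t w : List ℕ} (h : IsRRFactor t w) :
    IsRRFactor (t.map f) (w.map f) := by
  obtain ⟨ht, hnd, t', x, y, z, ht', rfl⟩ := isRRFactor_iff.1 h
  refine isRRFactor_iff.2 ⟨by simpa using ht, hnd.map f.injective, t'.map f, x.map f, y.map f,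
    z.map f, ?_, by simp⟩
  rcases ht' with rfl | rfl
  exacts [Or.inl rfl, Or.inr map_reverse]

theorem IsMaximalRR.map (f : ℕ ≃ ℕ) {t w : List ℕ} (h : IsMaximalRR t w) :
    IsMaximalRR (t.map f) (w.map f) := by
  refine ⟨h.1.map f, fun v hv htv => ?_⟩
  have := h.2 (v.map f.symm) (by simpa [map_map] using hv.map f.symm)
    (by simpa [map_map] using htv.map f.symm)
  simpa using this

/-- `d = d_t(w)` for some `t ∈ M^SOW_w`, on the nose: `ImmSucc` is this up to `~`. -/
def IsDeletion (w d : List ℕ) : Prop :=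
  ∃ t t' x y z, IsMaximalRR t w ∧ (t' = t ∨ t' = t.reverse) ∧ w = x ++ t ++ y ++ t' ++ z ∧
    d = x ++ y ++ z

theorem immSucc_iff {w v : List ℕ} : ImmSucc w v ↔ ∃ d, IsDeletion w d ∧ AOEquiv d v := by
  constructor
  · rintro ⟨t, x, y, z, hmax, hocc | hocc, hv⟩
    exacts [⟨_, ⟨t, t, x, y, z, hmax, Or.inl rfl, hocc, rfl⟩, hv⟩,
      ⟨_, ⟨t, _, x, y, z, hmax, Or.inr rfl, hocc, rfl⟩, hv⟩]
  · rintro ⟨_, ⟨t, t', x, y, z, hmax, ht', hocc, rfl⟩, hv⟩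
    rcases ht' with rfl | rfl
    exacts [⟨t', x, y, z, hmax, Or.inl hocc, hv⟩, ⟨t, x, y, z, hmax, Or.inr hocc, hv⟩]

theorem IsDeletion.immSucc {w d : List ℕ} (h : IsDeletion w d) : ImmSucc w d :=
  immSucc_iff.2 ⟨d, h, AOEquiv.refl d⟩

theorem IsDeletion.subset {w d : List ℕ} (h : IsDeletion w d) : d ⊆ w := by
  obtain ⟨t, t', x, y, z, -, -, rfl, rfl⟩ := h
  intro a
  simp only [mem_append]
  tauto

theorem IsDeletion.length_lt {w d : List ℕ} (h : IsDeletion w d) : d.length < w.length := by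
  obtain ⟨t, t', x, y, z, hmax, -, rfl, rfl⟩ := h
  have := length_pos_iff.2 hmax.1.ne_nil
  simp only [length_append]
  omega

theorem IsDeletion.map (f : ℕ ≃ ℕ) {w d : List ℕ} (h : IsDeletion w d) :
    IsDeletion (w.map f) (d.map f) := by
  obtain ⟨t, t', x, y, z, hmax, ht', rfl, rfl⟩ := h
  refine ⟨t.map f, t'.map f, x.map f, y.map f, z.map f, hmax.map f, ?_, by simp, by simp⟩
  rcases ht' with rfl | rfl
  exacts [Or.inl rfl, Or.inr map_reverse]

theorem ImmSucc.congr {a a' b b' : List ℕ} (h : ImmSucc a b) (ha : AOEquiv a a')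
    (hb : AOEquiv b b') : ImmSucc a' b' := by
  obtain ⟨d, hd, hdb⟩ := immSucc_iff.1 h
  obtain ⟨f, rfl⟩ := ha
  exact immSucc_iff.2 ⟨d.map f, hd.map f, (AOEquiv.symm ⟨f, rfl⟩).trans (hdb.trans hb)⟩

theorem classAdj_mk_iff {a b : List ℕ} : ClassAdj ⟦a⟧ ⟦b⟧ ↔ ImmSucc a b := by
  refine ⟨fun ⟨a', b', ha, hb, h⟩ => h.congr (mk_eq_mk_iff.1 ha) (mk_eq_mk_iff.1 hb),
    fun h => ⟨a, b, rfl, rfl, h⟩⟩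

theorem perm_of_eq_or_eq_reverse {t t' : List ℕ} (h : t' = t ∨ t' = t.reverse) : t'.Perm t := by
  rcases h with rfl | rfl
  exacts [Perm.refl _, reverse_perm _]

section DisjointAppend

variable {a b p q : List ℕ}

theorem append_eq_append_left_of_mem (hab : a.Disjoint b) (h : a ++ b = p ++ q) {c : ℕ}
    (hcq : c ∈ q) (hca : c ∈ a) : ∃ r, a = p ++ r ∧ q = r ++ b := by
  rcases append_eq_append_iff.1 h with ⟨e, -, rfl⟩ | hr
  exacts [(hab hca (mem_append_right e hcq)).elim, hr]

theorem append_eq_append_left_of_disjoint (h : a ++ b = p ++ q) (hpb : p.Disjoint b) :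
    ∃ r, a = p ++ r ∧ q = r ++ b := by
  rcases append_eq_append_iff.1 h with ⟨e, rfl, rfl⟩ | hr
  · obtain rfl : e = [] := eq_nil_iff_forall_not_mem.2 fun c hc =>
      hpb (mem_append_right a hc) (mem_append_left q hc)
    exact ⟨[], by simp, rfl⟩
  · exact hr

theorem append_eq_append_right_of_mem (hab : a.Disjoint b) (h : a ++ b = p ++ q) {c : ℕ}
    (hcp : c ∈ p) (hcb : c ∈ b) : ∃ l, b = l ++ q ∧ p = a ++ l := by
  rcases append_eq_append_iff.1 h with ⟨l, hp, hb⟩ | ⟨r, rfl, -⟩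
  exacts [⟨l, hb, hp⟩, (hab (mem_append_left r hcp) hcb).elim]

theorem append_eq_append_right_of_disjoint (h : a ++ b = p ++ q) (haq : a.Disjoint q) :
    ∃ l, b = l ++ q ∧ p = a ++ l := by
  rcases append_eq_append_iff.1 h with ⟨l, hp, hb⟩ | ⟨r, rfl, rfl⟩
  · exact ⟨l, hb, hp⟩
  · obtain rfl : r = [] := eq_nil_iff_forall_not_mem.2 fun c hc =>
      haq (mem_append_right p hc) (mem_append_left b hc)
    exact ⟨[], rfl, by simp⟩

/-- The two factors have the same letters, so they cannot lie on different sides of the cut. -/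
theorem occurrence_append_cases {t t' x y z : List ℕ} (hab : a.Disjoint b) (ht : t ≠ [])
    (ht' : t'.Perm t) (h : a ++ b = x ++ t ++ y ++ t' ++ z) :
    (∃ r, a = x ++ t ++ y ++ t' ++ r ∧ z = r ++ b) ∨
      ∃ l, b = l ++ t ++ y ++ t' ++ z ∧ x = a ++ l := by
  obtain ⟨c, hc⟩ := exists_mem_of_ne_nil t ht
  have hcab : c ∈ a ++ b := by rw [h]; simp [hc]
  rcases mem_append.1 hcab with hca | hcb
  · left
    obtain ⟨r, ha, hr⟩ := append_eq_append_left_of_mem (p := x ++ t ++ y) (q := t' ++ z) hab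
      (by simpa using h) (mem_append_left z (ht'.symm.subset hc)) hca
    have ht'a : t' ⊆ a := fun e he => by rw [ha]; simp [ht'.subset he]
    obtain ⟨r', rfl, hz⟩ := append_eq_append_left_of_disjoint hr.symm
      (disjoint_of_subset_left ht'a hab)
    exact ⟨r', by rw [ha]; simp, hz⟩
  · right
    obtain ⟨l, hb, hl⟩ := append_eq_append_right_of_mem (p := x ++ t) (q := y ++ t' ++ z) hab
      (by simpa using h) (mem_append_right x hc) hcb
    have htb : t ⊆ b := fun e he => by rw [hb]; simp [ht'.symm.subset he]
    obtain ⟨l', rfl, hx⟩ := append_eq_append_right_of_disjoint hl.symm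
      (disjoint_of_subset_right htb hab)
    exact ⟨l', by rw [hb]; simp, hx⟩

theorem IsRRFactor.append_cases {t : List ℕ} (hab : a.Disjoint b) (h : IsRRFactor t (a ++ b)) :
    IsRRFactor t a ∨ IsRRFactor t b := by
  obtain ⟨ht, hnd, t', x, y, z, ht', hocc⟩ := isRRFactor_iff.1 h
  rcases occurrence_append_cases hab ht (perm_of_eq_or_eq_reverse ht') hocc with
    ⟨r, ha, -⟩ | ⟨l, hb, -⟩
  exacts [Or.inl (isRRFactor_iff.2 ⟨ht, hnd, t', x, y, r, ht', ha⟩),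
    Or.inr (isRRFactor_iff.2 ⟨ht, hnd, t', l, y, z, ht', hb⟩)]

theorem IsMaximalRR.of_infix {t w : List ℕ} (h : IsMaximalRR t w) (ht : IsRRFactor t a)
    (ha : a <:+: w) : IsMaximalRR t a :=
  ⟨ht, fun v hv htv => h.2 v (hv.mono ha) htv⟩

theorem IsMaximalRR.append_right {t : List ℕ} (h : IsMaximalRR t a) (hab : a.Disjoint b) :
    IsMaximalRR t (a ++ b) := by
  refine ⟨h.1.mono (prefix_append a b).isInfix, fun v hv htv => ?_⟩
  refine (hv.append_cases hab).elim (h.2 v · htv) fun hvb => ?_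
  obtain ⟨c, hc⟩ := exists_mem_of_ne_nil t h.1.ne_nil
  exact (hab (h.1.infix.subset hc) (hvb.infix.subset (htv.subset hc))).elim

theorem IsMaximalRR.append_left {t : List ℕ} (h : IsMaximalRR t b) (hab : a.Disjoint b) :
    IsMaximalRR t (a ++ b) := by
  refine ⟨h.1.mono (suffix_append a b).isInfix, fun v hv htv => ?_⟩
  refine (hv.append_cases hab).elim (fun hva => ?_) (h.2 v · htv)
  obtain ⟨c, hc⟩ := exists_mem_of_ne_nil t h.1.ne_nil
  exact (hab (hva.infix.subset (htv.subset hc)) (h.1.infix.subset hc)).elim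

theorem isDeletion_append_iff {d : List ℕ} (hab : a.Disjoint b) :
    IsDeletion (a ++ b) d ↔
      (∃ d', IsDeletion a d' ∧ d = d' ++ b) ∨ ∃ d', IsDeletion b d' ∧ d = a ++ d' := by
  constructor
  · rintro ⟨t, t', x, y, z, hmax, ht', hocc, rfl⟩
    obtain ⟨ht, hnd, -⟩ := isRRFactor_iff.1 hmax.1
    rcases occurrence_append_cases hab ht (perm_of_eq_or_eq_reverse ht') hocc with
      ⟨r, ha, rfl⟩ | ⟨l, hb, rfl⟩
    · have hta := isRRFactor_iff.2 ⟨ht, hnd, t', x, y, r, ht', ha⟩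
      exact Or.inl ⟨x ++ y ++ r, ⟨t, t', x, y, r, hmax.of_infix hta (prefix_append a b).isInfix,
        ht', ha, rfl⟩, by simp⟩
    · have htb := isRRFactor_iff.2 ⟨ht, hnd, t', l, y, z, ht', hb⟩
      exact Or.inr ⟨l ++ y ++ z, ⟨t, t', l, y, z, hmax.of_infix htb (suffix_append a b).isInfix,
        ht', hb, rfl⟩, by simp⟩
  · rintro (⟨_, ⟨t, t', x, y, z, hmax, ht', rfl, rfl⟩, rfl⟩ |
      ⟨_, ⟨t, t', x, y, z, hmax, ht', rfl, rfl⟩, rfl⟩)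
    · exact ⟨t, t', x, y, z ++ b, hmax.append_right hab, ht', by simp, by simp⟩
    · exact ⟨t, t', a ++ x, y, z, hmax.append_left hab, ht', by simp, by simp⟩

end DisjointAppend

section Square

variable {u : List ℕ}

theorem IsRRFactor.infix_of_append_self {t : List ℕ} (hu : u.Nodup) (h : IsRRFactor t (u ++ u)) :
    t <:+: u := by
  obtain ⟨-, -, t', x, y, z, ht', hocc⟩ := isRRFactor_iff.1 h
  rcases append_eq_append_iff.1 (show u ++ u = x ++ (t ++ (y ++ t' ++ z)) by simpa using hocc)
    with ⟨e, -, hu'⟩ | ⟨m, hu', hm⟩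
  · exact ⟨e, y ++ t' ++ z, by rw [hu']; simp⟩
  rcases append_eq_append_iff.1 hm with ⟨e, rfl, -⟩ | ⟨e, rfl, hu₂⟩
  · exact ⟨x, e, by rw [hu']; simp⟩
  obtain rfl : e = [] := eq_nil_iff_forall_not_mem.2 fun c hc =>
    disjoint_of_nodup_append (hu₂ ▸ hu) hc
      (by simp [(perm_of_eq_or_eq_reverse ht').symm.subset (mem_append_right m hc)])
  exact ⟨x, [], by rw [hu']; simp⟩

theorem isMaximalRR_append_self_iff {t : List ℕ} (hu : u ≠ []) (hnd : u.Nodup) :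
    IsMaximalRR t (u ++ u) ↔ t = u := by
  have hrr : IsRRFactor u (u ++ u) := Or.inl ⟨hu, hnd, [], [], [], by simp⟩
  constructor
  · intro h
    have htu := h.1.infix_of_append_self hnd
    exact htu.eq_of_length (le_antisymm htu.length_le (h.2 u hrr htu))
  · rintro rfl
    exact ⟨hrr, fun v hv _ => (hv.infix_of_append_self hnd).length_le⟩

theorem isDeletion_append_self_iff {d : List ℕ} (hu : u ≠ []) (hnd : u.Nodup) :
    IsDeletion (u ++ u) d ↔ d = [] := by
  constructor
  · rintro ⟨t, t', x, y, z, hmax, ht', hocc, rfl⟩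
    obtain rfl := (isMaximalRR_append_self_iff hu hnd).1 hmax
    have hl := congrArg length hocc
    have ht'l := (perm_of_eq_or_eq_reverse ht').length_eq
    simp only [length_append] at hl
    apply eq_nil_of_length_eq_zero
    simp only [length_append]
    omega
  · rintro rfl
    exact ⟨u, u, [], [], [], (isMaximalRR_append_self_iff hu hnd).2 rfl, Or.inl rfl, by simp, rfl⟩

end Square

theorem IsDOW.of_aoEquiv {w w' : List ℕ} (hw : IsDOW w) (h : AOEquiv w w') : IsDOW w' := by
  obtain ⟨f, rfl⟩ := h
  intro a
  rw [← f.apply_symm_apply a, count_map_of_injective _ _ f.injective]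
  exact hw _

theorem IsDOW.of_isDeletion {w d : List ℕ} (hw : IsDOW w) (h : IsDeletion w d) : IsDOW d := by
  obtain ⟨t, t', x, y, z, hmax, ht', rfl, rfl⟩ := h
  intro a
  have h₁ := (perm_of_eq_or_eq_reverse ht').count_eq a
  have h₂ := nodup_iff_count_le_one.1 (isRRFactor_iff.1 hmax.1).2.1 a
  have := hw a
  simp only [count_append] at this ⊢
  omega

theorem IsDOW.of_successor {w v : List ℕ} (hw : IsDOW w) (h : Successor w v) : IsDOW v := by
  induction h with
  | refl => exact hw
  | tail _ hbc ih =>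
    obtain ⟨d, hd, hdc⟩ := immSucc_iff.1 hbc
    exact (ih.of_isDeletion hd).of_aoEquiv hdc

theorem IsDOW.disjoint_of_perm {w u v : List ℕ} (hw : IsDOW w) (h : w.Perm (v ++ u ++ u)) :
    u.Disjoint v := by
  intro a hau hav
  have := h.count_eq a
  have := count_pos_iff.2 hau
  have := count_pos_iff.2 hav
  simp only [count_append] at *
  rcases hw a with h₀ | h₀ <;> omega

theorem exists_isMaximalRR {t w : List ℕ} (h : IsRRFactor t w) : ∃ s, IsMaximalRR s w := by
  induction hn : w.length - t.length using Nat.strong_induction_on generalizing t with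
  | _ n ih =>
    by_cases hmax : IsMaximalRR t w
    · exact ⟨t, hmax⟩
    obtain ⟨v, hv, htv, hlt⟩ : ∃ v, IsRRFactor v w ∧ t <:+: v ∧ t.length < v.length := by
      simpa [IsMaximalRR, h] using hmax
    exact ih _ (by have := hv.infix.length_le; omega) hv rfl

theorem IsMaximalRR.exists_isDeletion {t w : List ℕ} (h : IsMaximalRR t w) :
    ∃ d, IsDeletion w d := by
  obtain ⟨-, -, t', x, y, z, ht', hocc⟩ := isRRFactor_iff.1 h.1
  exact ⟨_, t, t', x, y, z, h, ht', hocc, rfl⟩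

theorem IsDOW.exists_isDeletion {w : List ℕ} (hw : IsDOW w) (hne : w ≠ []) :
    ∃ d, IsDeletion w d := by
  obtain ⟨a, ha⟩ := exists_mem_of_ne_nil w hne
  have h2 : 2 ≤ w.count a := ((hw a).resolve_left (count_pos_iff.2 ha).ne').ge
  obtain ⟨r₁, r₂, rfl, ha₁, ha₂⟩ := cons_sublist_iff.1 (replicate_sublist_iff.2 h2)
  obtain ⟨x, y, rfl⟩ := append_of_mem ha₁
  obtain ⟨y', z, rfl⟩ := append_of_mem (singleton_sublist.1 ha₂)
  have hrr : IsRRFactor [a] (x ++ a :: y ++ (y' ++ a :: z)) :=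
    Or.inl ⟨by simp, by simp, x, y ++ y', z, by simp⟩
  obtain ⟨t, hmax⟩ := exists_isMaximalRR hrr
  exact hmax.exists_isDeletion

theorem IsDOW.successor_nil {w : List ℕ} (hw : IsDOW w) : Successor w [] := by
  induction hn : w.length using Nat.strong_induction_on generalizing w with
  | _ n ih =>
    rcases eq_or_ne w [] with rfl | hne
    · exact .refl
    obtain ⟨d, hd⟩ := hw.exists_isDeletion hne
    exact .head hd.immSucc (ih _ (hn ▸ hd.length_lt) (hw.of_isDeletion hd) rfl)

section WordGraph

/-- The vertex set of `G_w`; `WGVertex w` is definitionally its subtype. -/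
def wgClasses (w : List ℕ) : Set WordClass := {c | ∃ v, Successor w v ∧ ⟦v⟧ = c}

variable {u w v : List ℕ} {c d : WordClass}

theorem mk_mem_wgClasses (h : Successor w v) : ⟦v⟧ ∈ wgClasses w := ⟨v, h, rfl⟩

theorem wgClasses_subset_of_successor (h : Successor w v) : wgClasses v ⊆ wgClasses w :=
  fun _ ⟨s, hs, hc⟩ => ⟨s, h.trans hs, hc⟩

theorem wgClasses_subset_of_aoEquiv {w' : List ℕ} (h : AOEquiv w w') :
    wgClasses w ⊆ wgClasses w' := by
  rintro _ ⟨s, hs, rfl⟩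
  rcases hs.cases_head with rfl | ⟨b, hwb, hbs⟩
  · exact ⟨w', .refl, mk_eq_mk_iff.2 h.symm⟩
  · exact ⟨s, .head (hwb.congr h (.refl b)) hbs, rfl⟩

theorem mem_wgClasses_of_classAdj (hc : c ∈ wgClasses w) (h : ClassAdj c d) :
    d ∈ wgClasses w := by
  obtain ⟨v, hv, rfl⟩ := hc
  obtain ⟨a, b, ha, rfl, hab⟩ := h
  exact ⟨b, hv.tail (hab.congr (mk_eq_mk_iff.1 ha) (.refl b)), rfl⟩

theorem wgClasses_subset_of_classAdj_closed {S : Set WordClass} (hw : ⟦w⟧ ∈ S)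
    (hS : ∀ c ∈ S, ∀ d, ClassAdj c d → d ∈ S) : wgClasses w ⊆ S := by
  rintro _ ⟨v, hv, rfl⟩
  induction hv with
  | refl => exact hw
  | tail _ hbc ih => exact hS _ ih _ (classAdj_mk_iff.2 hbc)

theorem exists_disjoint_rep (hwu : u.Disjoint w) (hc : c ∈ wgClasses w) :
    ∃ v, Successor w v ∧ u.Disjoint v ∧ ⟦v⟧ = c := by
  obtain ⟨v, hv, rfl⟩ := hc
  rcases hv.cases_tail with rfl | ⟨b, hwb, hbv⟩
  · exact ⟨v, .refl, hwu, rfl⟩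
  obtain ⟨v', hvv', hv'⟩ := exists_disjoint_aoEquiv u v
  exact ⟨v', hwb.tail (hbv.congr (.refl b) hvv'), hv', mk_eq_mk_iff.2 hvv'.symm⟩

theorem CoprimeDOW.mk_not_mem_wgClasses {w' : List ℕ} (hcop : CoprimeDOW w w')
    (hw : Successor w []) (hw' : Successor w' []) (hne : w' ≠ []) : ⟦w'⟧ ∉ wgClasses w := by
  rintro ⟨s, hs, h⟩
  obtain ⟨-, f, hf⟩ := hcop s [] [] w' hs hw hw' .refl (by simpa using mk_eq_mk_iff.1 h)
  exact hne (by simpa using hf)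

end WordGraph

section Digraph

variable {V₁ V₂ V₃ : Type*} {A₁ : V₁ → V₁ → Prop} {A₂ : V₂ → V₂ → Prop} {A₃ : V₃ → V₃ → Prop}

theorem DigraphIso.symm (h : DigraphIso A₁ A₂) : DigraphIso A₂ A₁ := by
  obtain ⟨e, he⟩ := h
  exact ⟨e.symm, fun a b => by rw [← he, e.apply_symm_apply, e.apply_symm_apply]⟩

theorem DigraphIso.trans (h₁₂ : DigraphIso A₁ A₂) (h₂₃ : DigraphIso A₂ A₃) : DigraphIso A₁ A₃ := by
  obtain ⟨e, he⟩ := h₁₂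
  obtain ⟨e', he'⟩ := h₂₃
  exact ⟨e.trans e', fun a b => (he' _ _).trans (he a b)⟩

theorem digraphIso_induce_range {f : V₁ → V₂} (hf : Injective f)
    (hA : ∀ a b, A₂ (f a) (f b) ↔ A₁ a b) {S : Set V₂} (hS : Set.range f = S) :
    DigraphIso (fun a b : S => A₂ a b) A₁ := by
  subst hS
  refine ⟨(Equiv.ofInjective f hf).symm, ?_⟩
  rintro ⟨_, a, rfl⟩ ⟨_, b, rfl⟩
  rw [Equiv.ofInjective_symm_apply, Equiv.ofInjective_symm_apply]
  exact (hA a b).symm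

theorem digraphIso_boxAdj_simplexAdj_one {f₀ f₁ : V₁ → V₂} (hf₀ : Injective f₀)
    (hf₁ : Injective f₁) (hne : ∀ a b, f₀ a ≠ f₁ b) (hcover : ∀ c, (∃ a, f₀ a = c) ∨ ∃ a, f₁ a = c)
    (hA₀ : ∀ a b, A₂ (f₀ a) (f₀ b) ↔ A₁ a b) (hA₁ : ∀ a b, A₂ (f₁ a) (f₁ b) ↔ A₁ a b)
    (hA₀₁ : ∀ a b, A₂ (f₀ a) (f₁ b) ↔ a = b) (hA₁₀ : ∀ a b, ¬ A₂ (f₁ a) (f₀ b)) :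
    DigraphIso (boxAdj A₁ (simplexAdj 1)) A₂ := by
  let g : V₁ × Fin 2 → V₂ := fun p => if p.2 = 0 then f₀ p.1 else f₁ p.1
  have hg : Bijective g := by
    refine ⟨?_, fun c => ?_⟩
    · rintro ⟨a, i⟩ ⟨b, j⟩ h
      fin_cases i <;> fin_cases j <;> simp_all [g, hf₀.eq_iff, hf₁.eq_iff, (hne _ _).symm]
    · rcases hcover c with ⟨a, rfl⟩ | ⟨a, rfl⟩
      exacts [⟨(a, 0), by simp [g]⟩, ⟨(a, 1), by simp [g]⟩]
  refine ⟨Equiv.ofBijective g hg, ?_⟩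
  rintro ⟨a, i⟩ ⟨b, j⟩
  fin_cases i <;> fin_cases j <;> simp [g, boxAdj, simplexAdj, hA₀, hA₁, hA₀₁, hA₁₀]

end Digraph

/-- `P` attaches the square `u u` of a fresh single occurrence word `u` to a word, as
`v ↦ v u u` and `v ↦ u u v` do. -/
structure IsSquarePadding (u : List ℕ) (P : List ℕ → List ℕ) : Prop where
  isDeletion_iff : ∀ {v d : List ℕ}, u.Disjoint v →
    (IsDeletion (P v) d ↔ d = v ∨ ∃ d', IsDeletion v d' ∧ d = P d')
  aoEquiv : ∀ {a b : List ℕ}, u.Disjoint a → u.Disjoint b → AOEquiv a b → AOEquiv (P a) (P b)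
  aoEquiv_cancel : ∀ {a b : List ℕ}, AOEquiv (P a) (P b) → AOEquiv a b
  nil : P [] = u ++ u
  disjoint_of_isDOW : ∀ {v : List ℕ}, IsDOW (P v) → u.Disjoint v

theorem isSquarePadding_append {u : List ℕ} (hu : u ≠ []) (hnd : u.Nodup) :
    IsSquarePadding u (· ++ u ++ u) where
  isDeletion_iff {v d} hv := by
    rw [append_assoc, isDeletion_append_iff (disjoint_append_right.2 ⟨hv.symm, hv.symm⟩)]
    simp [isDeletion_append_self_iff hu hnd, or_comm]
  aoEquiv ha hb h := by
    simpa using h.append_right (q := u ++ u) (disjoint_append_right.2 ⟨ha.symm, ha.symm⟩)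
      (disjoint_append_right.2 ⟨hb.symm, hb.symm⟩)
  aoEquiv_cancel h := by
    simp only [append_assoc] at h
    exact (h.of_append (by simpa using h.length_eq)).1
  nil := by simp
  disjoint_of_isDOW h := h.disjoint_of_perm (.refl _)

theorem isSquarePadding_prepend {u : List ℕ} (hu : u ≠ []) (hnd : u.Nodup) :
    IsSquarePadding u (u ++ u ++ ·) where
  isDeletion_iff {v d} hv := by
    rw [isDeletion_append_iff (disjoint_append_left.2 ⟨hv, hv⟩)]
    simp [isDeletion_append_self_iff hu hnd]
  aoEquiv ha hb h := h.append_left (q := u ++ u) (disjoint_append_right.2 ⟨ha.symm, ha.symm⟩)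
      (disjoint_append_right.2 ⟨hb.symm, hb.symm⟩)
  aoEquiv_cancel h := (h.of_append rfl).2
  nil := append_nil _
  disjoint_of_isDOW h := h.disjoint_of_perm (by simpa using perm_append_comm (l₁ := u ++ u))

namespace IsSquarePadding

variable {u w v : List ℕ} {P : List ℕ → List ℕ} {c d : WordClass}

theorem immSucc_apply_iff (hP : IsSquarePadding u P) {s : List ℕ} (hv : u.Disjoint v) :
    ImmSucc (P v) s ↔ AOEquiv v s ∨ ∃ d, IsDeletion v d ∧ AOEquiv (P d) s := by
  rw [immSucc_iff]
  constructor
  · rintro ⟨e, he, hes⟩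
    rcases (hP.isDeletion_iff hv).1 he with rfl | ⟨d, hd, rfl⟩
    exacts [Or.inl hes, Or.inr ⟨d, hd, hes⟩]
  · rintro (h | ⟨d, hd, h⟩)
    exacts [⟨v, (hP.isDeletion_iff hv).2 (Or.inl rfl), h⟩,
      ⟨P d, (hP.isDeletion_iff hv).2 (Or.inr ⟨d, hd, rfl⟩), h⟩]

theorem isDeletion_square (hP : IsSquarePadding u P) : IsDeletion (u ++ u) [] :=
  hP.nil ▸ (hP.isDeletion_iff (disjoint_nil_right u)).2 (Or.inl rfl)

theorem wgClasses_subset (hP : IsSquarePadding u P) (hv : u.Disjoint v) :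
    wgClasses v ⊆ wgClasses (P v) :=
  wgClasses_subset_of_successor (.single ((hP.immSucc_apply_iff hv).2 (Or.inl (.refl v))))

theorem mk_apply_mem_wgClasses (hP : IsSquarePadding u P) (hv : u.Disjoint v) {v' : List ℕ}
    (h : Successor v v') (hv' : u.Disjoint v') : ⟦P v'⟧ ∈ wgClasses (P v) := by
  suffices ∀ v'', AOEquiv v' v'' → u.Disjoint v'' → ⟦P v''⟧ ∈ wgClasses (P v) from
    this v' (.refl v') hv'
  clear hv'
  induction h with
  | refl =>
    intro v'' h hv''
    exact mk_eq_mk_iff.2 (hP.aoEquiv hv hv'' h) ▸ mk_mem_wgClasses .refl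
  | @tail b s _ hbs ih =>
    intro s' hss' hs'
    obtain ⟨b', hbb', hb'⟩ := exists_disjoint_aoEquiv u b
    obtain ⟨e, he, hes'⟩ := immSucc_iff.1 (hbs.congr hbb' hss')
    have heu : u.Disjoint e := disjoint_of_subset_right he.subset hb'
    refine mem_wgClasses_of_classAdj (ih b' hbb' hb') (classAdj_mk_iff.2 ?_)
    exact (hP.immSucc_apply_iff hb').2 (Or.inr ⟨e, he, hP.aoEquiv heu hs' hes'⟩)

/-- On classes, `v ↦ P v` is well defined once `v` is replaced by a representative that
avoids the letters of `u`. -/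
noncomputable def padClass (hP : IsSquarePadding u P) : WordClass → WordClass :=
  Quotient.lift (fun v => ⟦P (Classical.choose (exists_disjoint_aoEquiv u v))⟧) fun a b hab => by
    have ha := Classical.choose_spec (exists_disjoint_aoEquiv u a)
    have hb := Classical.choose_spec (exists_disjoint_aoEquiv u b)
    exact mk_eq_mk_iff.2 (hP.aoEquiv ha.2 hb.2 (ha.1.symm.trans (AOEquiv.trans hab hb.1)))

theorem padClass_mk (hP : IsSquarePadding u P) (hv : u.Disjoint v) : hP.padClass ⟦v⟧ = ⟦P v⟧ :=
  have h := Classical.choose_spec (exists_disjoint_aoEquiv u v)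
  mk_eq_mk_iff.2 (hP.aoEquiv h.2 hv h.1.symm)

theorem padClass_injective (hP : IsSquarePadding u P) : Injective hP.padClass := by
  intro c d h
  obtain ⟨a, rfl⟩ := Quotient.exists_rep c
  obtain ⟨b, rfl⟩ := Quotient.exists_rep d
  obtain ⟨a', ha, ha'⟩ := exists_disjoint_aoEquiv u a
  obtain ⟨b', hb, hb'⟩ := exists_disjoint_aoEquiv u b
  rw [mk_eq_mk_iff.2 ha, mk_eq_mk_iff.2 hb, hP.padClass_mk ha', hP.padClass_mk hb'] at h
  rw [mk_eq_mk_iff.2 ha, mk_eq_mk_iff.2 hb]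
  exact mk_eq_mk_iff.2 (hP.aoEquiv_cancel (mk_eq_mk_iff.1 h))

/-- `P v` reduces to `P [] = u u`, which coprimality keeps out of `G_w`. -/
theorem padClass_not_mem (hP : IsSquarePadding u P) (hw : IsDOW w) (hwu : u.Disjoint w)
    (hcop : CoprimeDOW w (u ++ u)) (hc : c ∈ wgClasses w) : hP.padClass c ∉ wgClasses w := by
  obtain ⟨v, hv, hvu, rfl⟩ := exists_disjoint_rep hwu hc
  rintro ⟨v₁, hv₁, he⟩
  rw [hP.padClass_mk hvu] at he
  have hsq : ⟦u ++ u⟧ ∈ wgClasses (P v) :=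
    hP.nil ▸ hP.mk_apply_mem_wgClasses hvu (hw.of_successor hv).successor_nil (disjoint_nil_right u)
  refine hcop.mk_not_mem_wgClasses hw.successor_nil (.single hP.isDeletion_square.immSucc)
    (ne_nil_of_length_pos hP.isDeletion_square.length_lt) ?_
  exact wgClasses_subset_of_successor hv₁ (wgClasses_subset_of_aoEquiv (mk_eq_mk_iff.1 he.symm) hsq)

theorem wgClasses_eq (hP : IsSquarePadding u P) (hwu : u.Disjoint w) :
    wgClasses (P w) = wgClasses w ∪ hP.padClass '' wgClasses w := by
  apply subset_antisymm
  · refine wgClasses_subset_of_classAdj_closed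
      (Or.inr ⟨⟦w⟧, mk_mem_wgClasses .refl, hP.padClass_mk hwu⟩) ?_
    rintro _ (hc | ⟨c, hc, rfl⟩) d hcd
    · exact Or.inl (mem_wgClasses_of_classAdj hc hcd)
    obtain ⟨v, hv, hvu, rfl⟩ := exists_disjoint_rep hwu hc
    obtain ⟨s, rfl⟩ := Quotient.exists_rep d
    rw [hP.padClass_mk hvu, classAdj_mk_iff, hP.immSucc_apply_iff hvu] at hcd
    rcases hcd with h | ⟨e, he, hes⟩
    · exact Or.inl (mk_eq_mk_iff.2 h ▸ mk_mem_wgClasses hv)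
    · refine Or.inr ⟨⟦e⟧, mk_mem_wgClasses (hv.tail he.immSucc), ?_⟩
      rw [hP.padClass_mk (disjoint_of_subset_right he.subset hvu)]
      exact mk_eq_mk_iff.2 hes
  · rintro _ (hc | ⟨c, hc, rfl⟩)
    · exact hP.wgClasses_subset hwu hc
    obtain ⟨v, hv, hvu, rfl⟩ := exists_disjoint_rep hwu hc
    rw [hP.padClass_mk hvu]
    exact hP.mk_apply_mem_wgClasses hwu hv hvu

theorem classAdj_padClass_padClass_iff (hP : IsSquarePadding u P) (hw : IsDOW w)
    (hwu : u.Disjoint w) (hcop : CoprimeDOW w (u ++ u)) (hc : c ∈ wgClasses w)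
    (hd : d ∈ wgClasses w) : ClassAdj (hP.padClass c) (hP.padClass d) ↔ ClassAdj c d := by
  obtain ⟨a, ha, hau, rfl⟩ := exists_disjoint_rep hwu hc
  obtain ⟨b, -, hbu, rfl⟩ := exists_disjoint_rep hwu hd
  have hbw := hP.padClass_not_mem hw hwu hcop hd
  rw [hP.padClass_mk hbu] at hbw
  rw [hP.padClass_mk hau, hP.padClass_mk hbu, classAdj_mk_iff, classAdj_mk_iff,
    hP.immSucc_apply_iff hau, immSucc_iff]
  constructor
  · rintro (h | ⟨e, he, heb⟩)
    · exact (hbw (mk_eq_mk_iff.2 h ▸ mk_mem_wgClasses ha)).elim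
    · exact ⟨e, he, hP.aoEquiv_cancel heb⟩
  · rintro ⟨e, he, heb⟩
    exact Or.inr ⟨e, he, hP.aoEquiv (disjoint_of_subset_right he.subset hau) hbu heb⟩

theorem classAdj_padClass_left_iff (hP : IsSquarePadding u P) (hw : IsDOW w)
    (hwu : u.Disjoint w) (hcop : CoprimeDOW w (u ++ u)) (hc : c ∈ wgClasses w)
    (hd : d ∈ wgClasses w) : ClassAdj (hP.padClass c) d ↔ c = d := by
  obtain ⟨a, ha, hau, rfl⟩ := exists_disjoint_rep hwu hc
  obtain ⟨b, hb, -, rfl⟩ := exists_disjoint_rep hwu hd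
  rw [hP.padClass_mk hau, classAdj_mk_iff, hP.immSucc_apply_iff hau, mk_eq_mk_iff]
  refine ⟨fun h => h.resolve_right ?_, Or.inl⟩
  rintro ⟨e, he, heb⟩
  have heu := disjoint_of_subset_right he.subset hau
  have hew := hP.padClass_not_mem hw hwu hcop (mk_mem_wgClasses (ha.tail he.immSucc))
  rw [hP.padClass_mk heu] at hew
  exact hew (mk_eq_mk_iff.2 heb ▸ mk_mem_wgClasses hb)

theorem not_classAdj_padClass_right (hP : IsSquarePadding u P) (hw : IsDOW w)
    (hwu : u.Disjoint w) (hcop : CoprimeDOW w (u ++ u)) (hc : c ∈ wgClasses w)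
    (hd : d ∈ wgClasses w) : ¬ ClassAdj c (hP.padClass d) := fun h =>
  hP.padClass_not_mem hw hwu hcop hd (mem_wgClasses_of_classAdj hc h)

theorem exists_successor_mk_eq_iff (hP : IsSquarePadding u P) (hw : IsDOW w)
    (hwu : u.Disjoint w) (hcop : CoprimeDOW w (u ++ u)) (hc : c ∈ wgClasses (P w)) :
    (∃ v, Successor w v ∧ ⟦P v⟧ = c) ↔ c ∈ hP.padClass '' wgClasses w := by
  constructor
  · rintro ⟨v, hv, rfl⟩
    rw [hP.wgClasses_eq hwu] at hc
    refine hc.resolve_left fun ⟨v₁, hv₁, he⟩ => ?_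
    have hvu := hP.disjoint_of_isDOW ((hw.of_successor hv₁).of_aoEquiv (mk_eq_mk_iff.1 he))
    exact hP.padClass_not_mem hw hwu hcop (mk_mem_wgClasses hv)
      (hP.padClass_mk hvu ▸ ⟨v₁, hv₁, he⟩)
  · rintro ⟨d, hd, rfl⟩
    obtain ⟨v, hv, hvu, rfl⟩ := exists_disjoint_rep hwu hd
    exact ⟨v, hv, (hP.padClass_mk hvu).symm⟩

def includeVertex (hP : IsSquarePadding u P) (hwu : u.Disjoint w) (c : WGVertex w) :
    WGVertex (P w) :=
  ⟨c.1, hP.wgClasses_subset hwu c.2⟩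

noncomputable def padVertex (hP : IsSquarePadding u P) (hwu : u.Disjoint w) (c : WGVertex w) :
    WGVertex (P w) :=
  ⟨hP.padClass c.1, show _ ∈ wgClasses (P w) from hP.wgClasses_eq hwu ▸ Or.inr ⟨c.1, c.2, rfl⟩⟩

theorem includeVertex_injective (hP : IsSquarePadding u P) (hwu : u.Disjoint w) :
    Injective (hP.includeVertex hwu) :=
  fun _ _ h => Subtype.ext (congrArg Subtype.val h :)

theorem padVertex_injective (hP : IsSquarePadding u P) (hwu : u.Disjoint w) :
    Injective (hP.padVertex hwu) :=
  fun _ _ h => Subtype.ext (hP.padClass_injective (congrArg Subtype.val h :))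

theorem padVertex_ne_includeVertex (hP : IsSquarePadding u P) (hw : IsDOW w)
    (hwu : u.Disjoint w) (hcop : CoprimeDOW w (u ++ u)) (a b : WGVertex w) :
    hP.padVertex hwu a ≠ hP.includeVertex hwu b := fun h =>
  hP.padClass_not_mem hw hwu hcop a.2
    (by rw [show hP.padClass a.1 = b.1 from congrArg Subtype.val h]; exact b.2)

theorem exists_padVertex_or_includeVertex (hP : IsSquarePadding u P) (hwu : u.Disjoint w)
    (c : WGVertex (P w)) : (∃ a, hP.padVertex hwu a = c) ∨ ∃ a, hP.includeVertex hwu a = c := by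
  have hc : c.1 ∈ wgClasses (P w) := c.2
  rw [hP.wgClasses_eq hwu] at hc
  rcases hc with hc | ⟨d, hd, hdc⟩
  exacts [Or.inr ⟨⟨c.1, hc⟩, rfl⟩, Or.inl ⟨⟨d, hd⟩, Subtype.ext hdc⟩]

theorem range_includeVertex (hP : IsSquarePadding u P) (hwu : u.Disjoint w) :
    Set.range (hP.includeVertex hwu) = {c : WGVertex (P w) | ∃ v, Successor w v ∧ ⟦v⟧ = c.1} := by
  ext c
  exact ⟨fun ⟨d, hd⟩ => hd ▸ d.2, fun hc => ⟨⟨c.1, hc⟩, rfl⟩⟩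

theorem range_padVertex (hP : IsSquarePadding u P) (hw : IsDOW w) (hwu : u.Disjoint w)
    (hcop : CoprimeDOW w (u ++ u)) : Set.range (hP.padVertex hwu) =
      {c : WGVertex (P w) | ∃ v, Successor w v ∧ ⟦P v⟧ = c.1} := by
  ext c
  refine Iff.trans ?_ (hP.exists_successor_mk_eq_iff hw hwu hcop c.2).symm
  exact ⟨fun ⟨d, hd⟩ => hd ▸ ⟨d.1, d.2, rfl⟩, fun ⟨d, hd, hdc⟩ => ⟨⟨d, hd⟩, Subtype.ext hdc⟩⟩

theorem digraphIso_plain (hP : IsSquarePadding u P) (hwu : u.Disjoint w) :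
    DigraphIso (fun a b : {c : WGVertex (P w) | ∃ v, Successor w v ∧ ⟦v⟧ = c.1} =>
      WGAdj (P w) a.1 b.1) (WGAdj w) :=
  digraphIso_induce_range (hP.includeVertex_injective hwu) (fun _ _ => Iff.rfl)
    (hP.range_includeVertex hwu)

theorem digraphIso_padded (hP : IsSquarePadding u P) (hw : IsDOW w) (hwu : u.Disjoint w)
    (hcop : CoprimeDOW w (u ++ u)) :
    DigraphIso (fun a b : {c : WGVertex (P w) | ∃ v, Successor w v ∧ ⟦P v⟧ = c.1} =>
      WGAdj (P w) a.1 b.1) (WGAdj w) :=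
  digraphIso_induce_range (hP.padVertex_injective hwu)
    (fun a b => hP.classAdj_padClass_padClass_iff hw hwu hcop a.2 b.2)
    (hP.range_padVertex hw hwu hcop)

theorem plain_ne_padded (hP : IsSquarePadding u P) (hw : IsDOW w) (hwu : u.Disjoint w)
    (hcop : CoprimeDOW w (u ++ u)) :
    {c : WGVertex (P w) | ∃ v, Successor w v ∧ ⟦v⟧ = c.1} ≠
      {c : WGVertex (P w) | ∃ v, Successor w v ∧ ⟦P v⟧ = c.1} := by
  rw [← hP.range_includeVertex hwu, ← hP.range_padVertex hw hwu hcop]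
  intro h
  obtain ⟨d, hd⟩ : hP.includeVertex hwu ⟨⟦w⟧, mk_mem_wgClasses .refl⟩ ∈
      Set.range (hP.padVertex hwu) := h ▸ Set.mem_range_self _
  exact hP.padVertex_ne_includeVertex hw hwu hcop _ _ hd

theorem digraphIso_boxAdj (hP : IsSquarePadding u P) (hw : IsDOW w) (hwu : u.Disjoint w)
    (hcop : CoprimeDOW w (u ++ u)) :
    DigraphIso (boxAdj (WGAdj w) (simplexAdj 1)) (WGAdj (P w)) :=
  digraphIso_boxAdj_simplexAdj_one (hP.padVertex_injective hwu) (hP.includeVertex_injective hwu)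
    (hP.padVertex_ne_includeVertex hw hwu hcop) (hP.exists_padVertex_or_includeVertex hwu)
    (fun a b => hP.classAdj_padClass_padClass_iff hw hwu hcop a.2 b.2) (fun _ _ => Iff.rfl)
    (fun a b => (hP.classAdj_padClass_left_iff hw hwu hcop a.2 b.2).trans Subtype.ext_iff.symm)
    (fun a b => hP.not_classAdj_padClass_right hw hwu hcop a.2 b.2)

end IsSquarePadding

/-- doubling effect: if `w` and `uu` are coprime (with `u` a fresh
nonempty SOW), then `G_{wuu}` contains two distinct induced subgraphs isomorphic to
`G_w` (on the classes of the `v`'s and on the classes of the `vuu`'s, for `v` a vertex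
of `G_w`); similarly for `G_{uuw}`, and moreover `G_{wuu} ≅ G_{uuw}`. -/
theorem doubling_effect (w u : List ℕ) (hw : IsDOW w) (hu : u ≠ []) (hund : u.Nodup)
    (hfresh : ∀ a : ℕ, a ∈ u → a ∉ w) (hcop : CoprimeDOW w (u ++ u)) :
    (DigraphIso
        (fun a b : ({c : WGVertex (w ++ u ++ u) |
            ∃ v : List ℕ, Successor w v ∧ Quotient.mk aoSetoid v = c.1} : Set _) =>
          WGAdj (w ++ u ++ u) a.1 b.1)
        (WGAdj w)) ∧
      (DigraphIso
        (fun a b : ({c : WGVertex (w ++ u ++ u) |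
            ∃ v : List ℕ, Successor w v ∧ Quotient.mk aoSetoid (v ++ u ++ u) = c.1} : Set _) =>
          WGAdj (w ++ u ++ u) a.1 b.1)
        (WGAdj w)) ∧
      ({c : WGVertex (w ++ u ++ u) |
          ∃ v : List ℕ, Successor w v ∧ Quotient.mk aoSetoid v = c.1} ≠
        {c : WGVertex (w ++ u ++ u) |
          ∃ v : List ℕ, Successor w v ∧ Quotient.mk aoSetoid (v ++ u ++ u) = c.1}) ∧
      (DigraphIso
        (fun a b : ({c : WGVertex (u ++ u ++ w) |
            ∃ v : List ℕ, Successor w v ∧ Quotient.mk aoSetoid v = c.1} : Set _) =>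
          WGAdj (u ++ u ++ w) a.1 b.1)
        (WGAdj w)) ∧
      (DigraphIso
        (fun a b : ({c : WGVertex (u ++ u ++ w) |
            ∃ v : List ℕ, Successor w v ∧ Quotient.mk aoSetoid (u ++ u ++ v) = c.1} : Set _) =>
          WGAdj (u ++ u ++ w) a.1 b.1)
        (WGAdj w)) ∧
      DigraphIso (WGAdj (w ++ u ++ u)) (WGAdj (u ++ u ++ w)) := by
  have hA := isSquarePadding_append hu hund
  have hB := isSquarePadding_prepend hu hund
  exact ⟨hA.digraphIso_plain hfresh, hA.digraphIso_padded hw hfresh hcop,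
    hA.plain_ne_padded hw hfresh hcop, hB.digraphIso_plain hfresh,
    hB.digraphIso_padded hw hfresh hcop,
    (hA.digraphIso_boxAdj hw hfresh hcop).symm.trans (hB.digraphIso_boxAdj hw hfresh hcop)⟩
end
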